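/- Theorem 4.2, case B3. In addition to the common setup, assume b11 = b12, σ11 = σ12, b21 = b22, σ21 = σ22, and K₁ := K_{11} = K_{12} < K_{21} = K_{22} =: K₂; assume c12 > 0, c21 > 0, χ12 < 0, χ21 > 0 and χ12 + χ21 > 0 (Condition B3). Let m⁺ := m_{11}⁺ (= m_{12}⁺), x* := (m⁺·c12 / ((m⁺ − γ)·(K₂ − K₁)))^{1/γ} and A := (K₂ − K₁)·(γ/m⁺)·(x*)^{γ − m⁺}. Define v11(x) = K₁·x^γ + A·x^{m⁺} + χ12 for 0 < x < x* and = K₂·x^γ − c12 + χ12 for x ≥ x*; v12(x) = K₁·x^γ + A·x^{m⁺} for 0 < x < x* and = K₂·x^γ − c12 for x ≥ x*; v21(x) = K₂·x^γ + χ12 and v22(x) = K₂·x^γ for all x > 0. Then this quadruple solves the QVI system at every x > 0 with x ≠ x*. -/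

import Mathlib

/-- Generator of a one-dimensional geometric Brownian motion with drift `b` and
volatility `σ`: `(L v)(x) = (1/2)σ²x²v''(x) + b x v'(x)`. -/
noncomputable def Lop (b σ : ℝ) (v : ℝ → ℝ) (x : ℝ) : ℝ :=
  (1/2) * σ^2 * x^2 * deriv (deriv v) x + b * x * deriv v x

/-- The quadruple `(v11, v12, v21, v22)` solves the Isaacs system of
quasi-variational inequalities at the point `x`, with profit `f(x) = x^γ`. -/
def solvesQVI (r γ c12 c21 χ12 χ21 b11 σ11 b12 σ12 b21 σ21 b22 σ22 : ℝ)
    (v11 v12 v21 v22 : ℝ → ℝ) (x : ℝ) : Prop :=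
  max (min (r * v11 x - Lop b11 σ11 v11 x - x ^ γ) (v11 x - (v21 x - c12)))
      (v11 x - (v12 x + χ12)) = 0 ∧
  max (min (r * v12 x - Lop b12 σ12 v12 x - x ^ γ) (v12 x - (v22 x - c12)))
      (v12 x - (v11 x + χ21)) = 0 ∧
  max (min (r * v21 x - Lop b21 σ21 v21 x - x ^ γ) (v21 x - (v11 x - c21)))
      (v21 x - (v22 x + χ12)) = 0 ∧
  max (min (r * v22 x - Lop b22 σ22 v22 x - x ^ γ) (v22 x - (v12 x - c21)))
      (v22 x - (v21 x + χ21)) = 0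


/-!
Below `x*` the regime-1 values are `K₁x^γ + A x^m` (plus `χ12` for `v11`): `K₁x^γ` solves
`r v - L v = x^γ`, and `x^m` solves `r v - L v = 0` because `m` is the positive root of
`ψ(p) := bp + σ²p(p - 1)/2 = r`. Above `x*` the regime-2 value `K₂x^γ` minus the switching cost is
taken, and `A`, `x*` are fixed by value matching and smooth fit at `x*`. The regime-2 rows hold
since `v22` solves its HJB equation and `v21 = v22 + χ12` with `χ12 < 0 < χ12 + χ21`; the
regime-1 rows reduce to three inequalities:
* `A x^m ≤ (K₂ - K₁) x^γ` for `x ≤ x*`, as `m > γ`;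
* `(K₂ - K₁) x^γ - A x^m ≤ c12`, because by smooth fit the left side is maximal at `x*`;
* `r c12 ≤ (K₂ - K₁)(r - ψ(γ)) x^γ` for `x ≥ x*`, since `x^γ ≥ x*^γ` and
  `m (r - ψ(γ)) - r (m - γ) = σ²γm(m - γ)/2 ≥ 0`.
-/

open Real Filter Topology

noncomputable def powSymbol (b σ p : ℝ) : ℝ := b * p + 1/2 * σ^2 * p * (p - 1)

noncomputable def posRoot (b σ r : ℝ) : ℝ :=
  1/2 - b/σ^2 + √((1/2 - b/σ^2)^2 + 2*r/σ^2)

noncomputable def smoothFitCoeff (D γ m s : ℝ) : ℝ := D * (γ / m) * s ^ (γ - m)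

noncomputable def smoothFitThreshold (c D γ m : ℝ) : ℝ := (m * c / ((m - γ) * D)) ^ (1/γ)

section Generator

variable {b σ x : ℝ}

lemma Lop_congr {f g : ℝ → ℝ} (h : f =ᶠ[𝓝 x] g) : Lop b σ f x = Lop b σ g x := by
  rw [Lop, Lop, h.deriv_eq, h.deriv.deriv_eq]

lemma Lop_ite_of_lt {s : ℝ} {f g : ℝ → ℝ} (hx : x < s) :
    Lop b σ (fun y => if y < s then f y else g y) x = Lop b σ f x :=
  Lop_congr <| by filter_upwards [Iio_mem_nhds hx] with y hy using if_pos hy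

lemma Lop_ite_of_gt {s : ℝ} {f g : ℝ → ℝ} (hx : s < x) :
    Lop b σ (fun y => if y < s then f y else g y) x = Lop b σ g x :=
  Lop_congr <| by filter_upwards [Ioi_mem_nhds hx] with y hy using if_neg (not_lt.2 hy.le)

lemma Lop_add_const (f : ℝ → ℝ) (d : ℝ) : Lop b σ (fun y => f y + d) x = Lop b σ f x := by
  rw [Lop, Lop, deriv_add_const' d]

lemma Lop_sub_const (f : ℝ → ℝ) (d : ℝ) : Lop b σ (fun y => f y - d) x = Lop b σ f x := by
  simpa only [sub_eq_add_neg] using Lop_add_const f (-d)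

lemma hasDerivAt_rpow_add_rpow (a p c q : ℝ) (hx : 0 < x) :
    HasDerivAt (fun y => a * y ^ p + c * y ^ q) (a * p * x ^ (p - 1) + c * q * x ^ (q - 1)) x := by
  have hp := (hasDerivAt_rpow_const (p := p) (Or.inl hx.ne')).const_mul a
  have hq := (hasDerivAt_rpow_const (p := q) (Or.inl hx.ne')).const_mul c
  exact (hp.add hq).congr_deriv (by ring)

lemma Lop_rpow_add_rpow (a p c q : ℝ) (hx : 0 < x) :
    Lop b σ (fun y => a * y ^ p + c * y ^ q) x
      = a * powSymbol b σ p * x ^ p + c * powSymbol b σ q * x ^ q := by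
  have hderiv : deriv (fun y => a * y ^ p + c * y ^ q)
      =ᶠ[𝓝 x] fun y => a * p * y ^ (p - 1) + c * q * y ^ (q - 1) := by
    filter_upwards [Ioi_mem_nhds hx] with y hy using (hasDerivAt_rpow_add_rpow a p c q hy).deriv
  rw [Lop, hderiv.deriv_eq, (hasDerivAt_rpow_add_rpow (a * p) (p - 1) (c * q) (q - 1) hx).deriv,
    (hasDerivAt_rpow_add_rpow a p c q hx).deriv]
  simp only [rpow_sub_one hx.ne', powSymbol]
  field_simp
  ring

lemma Lop_const_mul_rpow (a p : ℝ) (hx : 0 < x) :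
    Lop b σ (fun y => a * y ^ p) x = a * powSymbol b σ p * x ^ p := by
  simpa using Lop_rpow_add_rpow (b := b) (σ := σ) a p 0 p hx

end Generator

section CharacteristicRoot

variable {b σ r p : ℝ}

lemma sub_powSymbol : r - powSymbol b σ p = r - b*p + 1/2*σ^2*p*(1-p) := by
  unfold powSymbol; ring

lemma powSymbol_sub_eq (hσ : σ ≠ 0) :
    powSymbol b σ p - r
      = σ^2/2 * ((p - (1/2 - b/σ^2))^2 - ((1/2 - b/σ^2)^2 + 2*r/σ^2)) := by
  unfold powSymbol; field_simp; ring

lemma powSymbol_posRoot (hσ : σ ≠ 0) (hr : 0 ≤ r) : powSymbol b σ (posRoot b σ r) = r := by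
  have h := powSymbol_sub_eq (b := b) (r := r) (p := posRoot b σ r) hσ
  rw [posRoot, add_sub_cancel_left, sq_sqrt (by positivity), sub_self, mul_zero] at h
  exact sub_eq_zero.1 h

lemma lt_posRoot_of_powSymbol_lt (hσ : σ ≠ 0) (h : powSymbol b σ p < r) : p < posRoot b σ r := by
  have hneg := sub_neg.2 h
  rw [powSymbol_sub_eq hσ] at hneg
  have hsq := lt_sqrt_of_sq_lt (sub_neg.1 (neg_of_mul_neg_right hneg (by positivity)))
  rw [posRoot]
  linarith

lemma mul_sub_powSymbol_eq_one {K γ : ℝ} (hd : r - b*γ + 1/2*σ^2*γ*(1-γ) ≠ 0)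
    (hK : K = 1/(r - b*γ + 1/2*σ^2*γ*(1-γ))) : K * (r - powSymbol b σ γ) = 1 := by
  rw [sub_powSymbol, hK, one_div_mul_cancel hd]

lemma mul_one_sub_div_le_sub_powSymbol {γ m : ℝ} (hroot : powSymbol b σ m = r) (hγ : 0 ≤ γ)
    (hγm : γ ≤ m) (hm : m ≠ 0) : r * (1 - γ / m) ≤ r - powSymbol b σ γ := by
  rw [← sub_nonneg]
  have key : r - powSymbol b σ γ - r * (1 - γ / m) = σ ^ 2 / 2 * γ * (m - γ) := by
    rw [← hroot]; unfold powSymbol; field_simp; ring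
  rw [key]
  exact mul_nonneg (by positivity) (sub_nonneg.2 hγm)

end CharacteristicRoot

section SmoothFit

variable {D γ m s x : ℝ}

lemma smoothFitCoeff_mul_rpow (hx : 0 < x) (hs : 0 < s) :
    smoothFitCoeff D γ m s * x ^ m = D * (γ / m) * (x / s) ^ m * s ^ γ := by
  rw [smoothFitCoeff, div_rpow hx.le hs.le, rpow_sub hs]
  field_simp

lemma smoothFitCoeff_mul_rpow_le (hD : 0 ≤ D) (hγ : 0 ≤ γ) (hγm : γ ≤ m) (hx : 0 < x)
    (hxs : x ≤ s) : smoothFitCoeff D γ m s * x ^ m ≤ D * x ^ γ := by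
  have hs := hx.trans_le hxs
  have ht : x / s ≤ 1 := (div_le_one hs).2 hxs
  calc smoothFitCoeff D γ m s * x ^ m = D * (γ / m) * (x / s) ^ m * s ^ γ :=
        smoothFitCoeff_mul_rpow hx hs
    _ ≤ D * 1 * (x / s) ^ γ * s ^ γ := by
        gcongr D * ?_ * ?_ * _
        · exact div_le_one_of_le₀ hγm (hγ.trans hγm)
        · exact rpow_le_rpow_of_exponent_ge (by positivity) ht hγm
    _ = D * x ^ γ := by rw [div_rpow hx.le hs.le]; field_simp

/-- Smooth fit makes `s` the maximiser of `x ↦ D x^γ - A x^m`; this is Bernoulli's inequality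
`(t^m)^(γ/m) ≤ 1 + (γ/m)(t^m - 1)` at `t = x/s`. -/
lemma mul_rpow_sub_smoothFitCoeff_mul_rpow_le (hD : 0 ≤ D) (hγ : 0 < γ) (hγm : γ ≤ m)
    (hx : 0 < x) (hs : 0 < s) :
    D * x ^ γ - smoothFitCoeff D γ m s * x ^ m ≤ D * (1 - γ / m) * s ^ γ := by
  have hm : 0 < m := hγ.trans_le hγm
  have ht : 0 < x / s := div_pos hx hs
  have hbernoulli : (x / s) ^ γ ≤ 1 + γ / m * ((x / s) ^ m - 1) := by
    have h := rpow_one_add_le_one_add_mul_self (s := (x / s) ^ m - 1)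
      (by linarith [rpow_pos_of_pos ht m]) (div_nonneg hγ.le hm.le) (div_le_one_of_le₀ hγm hm.le)
    rwa [add_sub_cancel, ← rpow_mul ht.le, mul_div_cancel₀ _ hm.ne'] at h
  rw [smoothFitCoeff_mul_rpow hx hs, show x ^ γ = (x / s) ^ γ * s ^ γ by
    rw [div_rpow hx.le hs.le]; field_simp]
  have := mul_le_mul_of_nonneg_left hbernoulli (mul_nonneg hD (rpow_pos_of_pos hs γ).le)
  linarith

lemma smoothFitThreshold_pos {c : ℝ} (hγm : γ < m) (hm : 0 < m) (hc : 0 < c) (hD : 0 < D) :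
    0 < smoothFitThreshold c D γ m :=
  rpow_pos_of_pos (div_pos (mul_pos hm hc) (mul_pos (sub_pos.2 hγm) hD)) _

lemma eq_mul_rpow_smoothFitThreshold {c : ℝ} (hγ : 0 < γ) (hγm : γ < m) (hc : 0 ≤ c)
    (hD : 0 < D) :
    c = D * (1 - γ / m) * smoothFitThreshold c D γ m ^ γ := by
  have hm : 0 < m := hγ.trans hγm
  have hmγ : 0 < m - γ := sub_pos.2 hγm
  rw [smoothFitThreshold, ← rpow_mul (by positivity), one_div_mul_cancel hγ.ne', rpow_one]
  field_simp

end SmoothFit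

lemma max_min_eq_zero_of_min_nonpos {α : Type*} [LinearOrder α] [Zero α] {a b c : α}
    (h : min a b ≤ 0) (hc : c = 0) : max (min a b) c = 0 := by
  rw [hc]; exact max_eq_right h

lemma max_min_eq_zero_of_min_eq_zero {α : Type*} [LinearOrder α] [Zero α] {a b c : α}
    (h : min a b = 0) (hc : c ≤ 0) : max (min a b) c = 0 := by
  rw [h]; exact max_eq_left hc

section CaseB3

variable {r γ c12 c21 χ12 χ21 b₁ σ₁ b₂ σ₂ K₁ K₂ m xs A x : ℝ}

lemma solvesQVI_of_regime1_rows {v11 v12 : ℝ → ℝ} (hx : 0 < x) (hr : 0 < r)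
    (hK₂ : K₂ * (r - powSymbol b₂ σ₂ γ) = 1) (hχ12 : χ12 < 0) (hχ : 0 < χ12 + χ21)
    (h11 : v11 x = v12 x + χ12)
    (hrow1 : min (r * v11 x - Lop b₁ σ₁ v11 x - x ^ γ) (v11 x - (K₂ * x ^ γ + χ12 - c12)) ≤ 0)
    (hrow2 : min (r * v12 x - Lop b₁ σ₁ v12 x - x ^ γ) (v12 x - (K₂ * x ^ γ - c12)) = 0)
    (h12 : v12 x ≤ K₂ * x ^ γ + c21) :
    solvesQVI r γ c12 c21 χ12 χ21 b₁ σ₁ b₁ σ₁ b₂ σ₂ b₂ σ₂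
      v11 v12 (fun y => K₂ * y ^ γ + χ12) (fun y => K₂ * y ^ γ) x := by
  have hres22 : r * (K₂ * x ^ γ) - Lop b₂ σ₂ (fun y => K₂ * y ^ γ) x - x ^ γ = 0 := by
    rw [Lop_const_mul_rpow K₂ γ hx]; linear_combination x ^ γ * hK₂
  have hres21 : r * (K₂ * x ^ γ + χ12) - Lop b₂ σ₂ (fun y => K₂ * y ^ γ + χ12) x - x ^ γ
      = r * χ12 := by
    rw [Lop_add_const (fun y => K₂ * y ^ γ)]; linear_combination hres22
  refine ⟨max_min_eq_zero_of_min_nonpos hrow1 (by rw [h11]; ring),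
    max_min_eq_zero_of_min_eq_zero hrow2 (by rw [h11]; linarith),
    max_min_eq_zero_of_min_nonpos (min_le_of_left_le ?_) (by ring),
    max_min_eq_zero_of_min_eq_zero ?_ (by linarith)⟩
  · rw [hres21]; exact (mul_neg_of_pos_of_neg hr hχ12).le
  · rw [hres22]; exact min_eq_left (by linarith)

lemma solvesQVI_of_lt_threshold (hx : 0 < x) (hlt : x < xs) (hr : 0 < r)
    (hK₁ : K₁ * (r - powSymbol b₁ σ₁ γ) = 1) (hK₂ : K₂ * (r - powSymbol b₂ σ₂ γ) = 1)
    (hroot : powSymbol b₁ σ₁ m = r) (hγ : 0 < γ) (hγm : γ < m) (hK : K₁ < K₂)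
    (hA : A = smoothFitCoeff (K₂ - K₁) γ m xs) (hc12 : c12 = (K₂ - K₁) * (1 - γ / m) * xs ^ γ)
    (hc21 : 0 ≤ c21) (hχ12 : χ12 < 0) (hχ : 0 < χ12 + χ21) :
    solvesQVI r γ c12 c21 χ12 χ21 b₁ σ₁ b₁ σ₁ b₂ σ₂ b₂ σ₂
      (fun y => if y < xs then K₁ * y ^ γ + A * y ^ m + χ12 else K₂ * y ^ γ - c12 + χ12)
      (fun y => if y < xs then K₁ * y ^ γ + A * y ^ m else K₂ * y ^ γ - c12)
      (fun y => K₂ * y ^ γ + χ12) (fun y => K₂ * y ^ γ) x := by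
  have hD : 0 ≤ K₂ - K₁ := sub_nonneg.2 hK.le
  have hres : r * (K₁ * x ^ γ + A * x ^ m) - Lop b₁ σ₁ (fun y => K₁ * y ^ γ + A * y ^ m) x
      - x ^ γ = 0 := by
    rw [Lop_rpow_add_rpow _ _ _ _ hx]; linear_combination x ^ γ * hK₁ - A * x ^ m * hroot
  have hbelow : A * x ^ m ≤ (K₂ - K₁) * x ^ γ :=
    hA ▸ smoothFitCoeff_mul_rpow_le hD hγ.le hγm.le hx hlt.le
  have hgap : (K₂ - K₁) * x ^ γ - A * x ^ m ≤ c12 :=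
    hc12 ▸ hA ▸ mul_rpow_sub_smoothFitCoeff_mul_rpow_le hD hγ hγm.le hx (hx.trans hlt)
  apply solvesQVI_of_regime1_rows hx hr hK₂ hχ12 hχ
  · simp only [if_pos hlt]
  · rw [Lop_ite_of_lt hlt, Lop_add_const (fun y => K₁ * y ^ γ + A * y ^ m)]
    simp only [if_pos hlt]
    exact min_le_of_left_le (by linarith [mul_neg_of_pos_of_neg hr hχ12])
  · rw [Lop_ite_of_lt hlt]
    simp only [if_pos hlt]
    rw [hres]
    exact min_eq_left (by linarith)
  · simp only [if_pos hlt]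
    linarith

lemma solvesQVI_of_threshold_lt (hx : 0 < x) (hgt : xs < x) (hxs : 0 ≤ xs) (hr : 0 < r)
    (hK₁ : K₁ * (r - powSymbol b₁ σ₁ γ) = 1) (hK₂ : K₂ * (r - powSymbol b₂ σ₂ γ) = 1)
    (hroot : powSymbol b₁ σ₁ m = r) (hγ : 0 < γ) (hγm : γ < m) (hK : K₁ < K₂)
    (hc12 : c12 = (K₂ - K₁) * (1 - γ / m) * xs ^ γ)
    (hc : 0 ≤ c12 + c21) (hχ12 : χ12 < 0) (hχ : 0 < χ12 + χ21) :
    solvesQVI r γ c12 c21 χ12 χ21 b₁ σ₁ b₁ σ₁ b₂ σ₂ b₂ σ₂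
      (fun y => if y < xs then K₁ * y ^ γ + A * y ^ m + χ12 else K₂ * y ^ γ - c12 + χ12)
      (fun y => if y < xs then K₁ * y ^ γ + A * y ^ m else K₂ * y ^ γ - c12)
      (fun y => K₂ * y ^ γ + χ12) (fun y => K₂ * y ^ γ) x := by
  have hnlt : ¬ x < xs := not_lt.2 hgt.le
  have hres : r * (K₂ * x ^ γ - c12) - Lop b₁ σ₁ (fun y => K₂ * y ^ γ - c12) x - x ^ γ
      = (K₂ - K₁) * (r - powSymbol b₁ σ₁ γ) * x ^ γ - r * c12 := by
    rw [Lop_sub_const (fun y => K₂ * y ^ γ), Lop_const_mul_rpow K₂ γ hx]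
    linear_combination x ^ γ * hK₁
  have hrc12_le : r * c12 ≤ (K₂ - K₁) * (r - powSymbol b₁ σ₁ γ) * x ^ γ :=
    calc r * c12 = (K₂ - K₁) * (r * (1 - γ / m)) * xs ^ γ := by rw [hc12]; ring
      _ ≤ (K₂ - K₁) * (r - powSymbol b₁ σ₁ γ) * x ^ γ := by
        have hD : 0 ≤ K₂ - K₁ := sub_nonneg.2 hK.le
        have hψ := mul_one_sub_div_le_sub_powSymbol hroot hγ.le hγm.le (hγ.trans hγm).ne'
        have hd : 0 ≤ r - powSymbol b₁ σ₁ γ := le_trans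
          (mul_nonneg hr.le (sub_nonneg.2 (div_le_one_of_le₀ hγm.le (hγ.trans hγm).le))) hψ
        gcongr
  apply solvesQVI_of_regime1_rows hx hr hK₂ hχ12 hχ
  · simp only [if_neg hnlt]
  · simp only [if_neg hnlt]
    exact min_le_of_right_le (by linarith)
  · rw [Lop_ite_of_gt hgt]
    simp only [if_neg hnlt]
    rw [hres, sub_self]
    exact min_eq_right (by linarith)
  · simp only [if_neg hnlt]
    linarith

end CaseB3

theorem thm4_2_B3_general
    (r γ c12 c21 χ12 χ21 : ℝ)
    (b11 σ11 b12 σ12 b21 σ21 b22 σ22 : ℝ)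
    (K11 K21 : ℝ)
    (hr : 0 < r) (hγ0 : 0 < γ)
    (hσ11 : 0 < σ11)
    (hd11 : 0 < r - b11*γ + (1/2)*σ11^2*γ*(1-γ))
    (hd21 : 0 < r - b21*γ + (1/2)*σ21^2*γ*(1-γ))
    (hK11 : K11 = 1/(r - b11*γ + (1/2)*σ11^2*γ*(1-γ)))
    (hK21 : K21 = 1/(r - b21*γ + (1/2)*σ21^2*γ*(1-γ)))
    (heqb12 : b12 = b11) (heqσ12 : σ12 = σ11)
    (heqb22 : b22 = b21) (heqσ22 : σ22 = σ21)
    (K₁ K₂ : ℝ) (hK₁ : K₁ = K11) (hK₂ : K₂ = K21)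
    (hKlt : K₁ < K₂)
    (m : ℝ) (hm : m = 1/2 - b11/σ11^2 + Real.sqrt ((1/2 - b11/σ11^2)^2 + 2*r/σ11^2))
    (xs A : ℝ)
    (hxs : xs = (m * c12 / ((m - γ) * (K₂ - K₁))) ^ (1/γ))
    (hA : A = (K₂ - K₁) * (γ / m) * xs ^ (γ - m))
    (hc12 : 0 < c12) (hc21 : 0 < c21) (hχ12 : χ12 < 0)
    (hχsum : 0 < χ12 + χ21)
    :
    ∀ x : ℝ, 0 < x → x ≠ xs →
      solvesQVI r γ c12 c21 χ12 χ21 b11 σ11 b12 σ12 b21 σ21 b22 σ22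
        (fun y => if y < xs then K₁ * y ^ γ + A * y ^ m + χ12 else K₂ * y ^ γ - c12 + χ12)
        (fun y => if y < xs then K₁ * y ^ γ + A * y ^ m else K₂ * y ^ γ - c12)
        (fun y => K₂ * y ^ γ + χ12)
        (fun y => K₂ * y ^ γ) x := by
  subst b12 σ12 b22 σ22 K₁ K₂
  have hK₁ := mul_sub_powSymbol_eq_one hd11.ne' hK11
  have hK₂ := mul_sub_powSymbol_eq_one hd21.ne' hK21
  have hroot : powSymbol b11 σ11 m = r := hm ▸ powSymbol_posRoot hσ11.ne' hr.le
  have hγm : γ < m := hm ▸ lt_posRoot_of_powSymbol_lt hσ11.ne' (sub_pos.1 (sub_powSymbol ▸ hd11))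
  have hD : 0 < K21 - K11 := sub_pos.2 hKlt
  have hxs0 : 0 < xs := hxs ▸ smoothFitThreshold_pos hγm (hγ0.trans hγm) hc12 hD
  have hc12' : c12 = (K21 - K11) * (1 - γ / m) * xs ^ γ :=
    hxs ▸ eq_mul_rpow_smoothFitThreshold hγ0 hγm hc12.le hD
  intro x hx hne
  rcases hne.lt_or_gt with hlt | hgt
  · exact solvesQVI_of_lt_threshold hx hlt hr hK₁ hK₂ hroot hγ0 hγm hKlt hA hc12' hc21.le
      hχ12 hχsum
  · exact solvesQVI_of_threshold_lt hx hgt hxs0.le hr hK₁ hK₂ hroot hγ0 hγm hKlt hc12'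
      (by linarith) hχ12 hχsum

theorem thm4_2_B3
    (r γ c12 c21 χ12 χ21 : ℝ)
    (b11 σ11 b12 σ12 b21 σ21 b22 σ22 : ℝ)
    (K11 K12 K21 K22 : ℝ)
    (hr : 0 < r) (hγ0 : 0 < γ) (hγ1 : γ < 1)
    (hσ11 : 0 < σ11) (hσ12 : 0 < σ12) (hσ21 : 0 < σ21) (hσ22 : 0 < σ22)
    (hd11 : 0 < r - b11*γ + (1/2)*σ11^2*γ*(1-γ))
    (hd12 : 0 < r - b12*γ + (1/2)*σ12^2*γ*(1-γ))
    (hd21 : 0 < r - b21*γ + (1/2)*σ21^2*γ*(1-γ))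
    (hd22 : 0 < r - b22*γ + (1/2)*σ22^2*γ*(1-γ))
    (hrb11 : b11 < r) (hrb12 : b12 < r) (hrb21 : b21 < r) (hrb22 : b22 < r)
    (hK11 : K11 = 1/(r - b11*γ + (1/2)*σ11^2*γ*(1-γ)))
    (hK12 : K12 = 1/(r - b12*γ + (1/2)*σ12^2*γ*(1-γ)))
    (hK21 : K21 = 1/(r - b21*γ + (1/2)*σ21^2*γ*(1-γ)))
    (hK22 : K22 = 1/(r - b22*γ + (1/2)*σ22^2*γ*(1-γ)))
    (heqb12 : b12 = b11) (heqσ12 : σ12 = σ11)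
    (heqb22 : b22 = b21) (heqσ22 : σ22 = σ21)
    (K₁ K₂ : ℝ) (hK₁ : K₁ = K11) (hK₂ : K₂ = K21)
    (hKlt : K₁ < K₂)
    (m : ℝ) (hm : m = 1/2 - b11/σ11^2 + Real.sqrt ((1/2 - b11/σ11^2)^2 + 2*r/σ11^2))
    (xs A : ℝ)
    (hxs : xs = (m * c12 / ((m - γ) * (K₂ - K₁))) ^ (1/γ))
    (hA : A = (K₂ - K₁) * (γ / m) * xs ^ (γ - m))
    (hc12 : 0 < c12) (hc21 : 0 < c21) (hχ12 : χ12 < 0) (hχ21 : 0 < χ21)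
    (hχsum : 0 < χ12 + χ21)
    :
    ∀ x : ℝ, 0 < x → x ≠ xs →
      solvesQVI r γ c12 c21 χ12 χ21 b11 σ11 b12 σ12 b21 σ21 b22 σ22
        (fun y => if y < xs then K₁ * y ^ γ + A * y ^ m + χ12 else K₂ * y ^ γ - c12 + χ12)
        (fun y => if y < xs then K₁ * y ^ γ + A * y ^ m else K₂ * y ^ γ - c12)
        (fun y => K₂ * y ^ γ + χ12)
        (fun y => K₂ * y ^ γ) x :=
  thm4_2_B3_general r γ c12 c21 χ12 χ21 b11 σ11 b12 σ12 b21 σ21 b22 σ22 K11 K21 hr hγ0 hσ11 hd11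
    hd21 hK11 hK21 heqb12 heqσ12 heqb22 heqσ22 K₁ K₂ hK₁ hK₂ hKlt m hm xs A hxs hA hc12 hc21 hχ12
    hχsum
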